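/- Let (v₁, v₂) be an orthonormal basis of ℝ², 0 < d₁ < d₂, n₁, n₂ > 1, u a unit vector in ℝ², and 1 ≤ s with s·d₁ < d₂. Set c = ⟨u, v₁⟩, s₁ = √((s² − 1)·c² + 1), s₂ = √((s² − 1)·(1 − c²) + 1), and let q_{i,j} = S_{u,s}(i·d₁·v₁ + j·d₂·v₂). For r > 0, let H_r be the simple graph on {0,…,n₁−1} × {0,…,n₂−1} in which distinct indices are adjacent iff ‖q_{i,j} − q_{i′,j′}‖₂ ≤ r. Then: (a) H_{s₁·d₁} has exactly n₂ connected components (the rows); and (b) H_{s₂·d₂} is connected. -/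

import Mathlib

/-! Writing `S = S_{u,s}`, orthogonality of `U` and `U u = e₁` give
`‖S w‖² = (s² - 1)⟪u, w⟫² + ‖w‖²`, hence `‖w‖ ≤ ‖S w‖ ≤ s‖w‖`. The first threshold is
exactly the length `‖S (d₁ v₁)‖` of a scaled horizontal grid step, while points in different
rows are at distance at least `d₂ > s d₁` before scaling, hence also after: the components are
the rows. By Bessel's inequality `⟪u, v₂⟫² ≤ 1 - ⟪u, v₁⟫²`, so the second threshold is at least
the length `‖S (d₂ v₂)‖ ≥ d₂ > ‖S (d₁ v₁)‖` of a scaled vertical step, and every grid step is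
an edge. -/

open scoped RealInnerProductSpace

/-- The directional scaling map `S_{u,α} = U⁻¹ ⬝ diag(α,1,…,1) ⬝ U` on Euclidean space,
for an orthogonal base-change matrix `U` (with `U u = e₁`) and scaling factor `α`. -/
noncomputable def scalingMap {n : ℕ} [NeZero n] (U : Matrix (Fin n) (Fin n) ℝ) (α : ℝ) :
    EuclideanSpace ℝ (Fin n) →ₗ[ℝ] EuclideanSpace ℝ (Fin n) :=
  Matrix.toEuclideanLin (U⁻¹ * Matrix.diagonal (fun i : Fin n => if i = 0 then α else 1) * U)

/-- The rotated grid point `p_{i,j} = i·d₁·v₁ + j·d₂·v₂` in `ℝ²`. -/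
noncomputable def gridPoint (v₁ v₂ : EuclideanSpace ℝ (Fin 2)) (d₁ d₂ : ℝ) {n₁ n₂ : ℕ}
    (a : Fin n₁ × Fin n₂) : EuclideanSpace ℝ (Fin 2) :=
  ((a.1 : ℝ) * d₁) • v₁ + ((a.2 : ℝ) * d₂) • v₂

/-- The proximity graph at scale `r`: distinct vertices are adjacent iff their points are at
Euclidean distance at most `r` (the 1-skeleton of the Vietoris–Rips complex). -/
def proximityGraph {V : Type*} (f : V → EuclideanSpace ℝ (Fin 2)) (r : ℝ) : SimpleGraph V :=
  SimpleGraph.fromRel fun a b => ‖f a - f b‖ ≤ r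

theorem inner_sq_add_inner_sq_le {E : Type*} [NormedAddCommGroup E] [InnerProductSpace ℝ E]
    {v₁ v₂ : E} (hv₁ : ‖v₁‖ = 1) (hv₂ : ‖v₂‖ = 1) (hv₁₂ : ⟪v₁, v₂⟫ = 0) (u : E) :
    ⟪u, v₁⟫ ^ 2 + ⟪u, v₂⟫ ^ 2 ≤ ‖u‖ ^ 2 := by
  have hv : Orthonormal ℝ ![v₁, v₂] := by
    rw [orthonormal_iff_ite]
    intro i j
    fin_cases i <;> fin_cases j <;> simp [hv₁, hv₂, hv₁₂, real_inner_comm v₁ v₂]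
  simpa [Fin.sum_univ_two, real_inner_comm u] using
    hv.sum_inner_products_le (x := u) (s := .univ)

theorem Matrix.toEuclideanCLM_mem_unitary {n : Type*} [Fintype n] [DecidableEq n]
    {U : Matrix n n ℝ} (hU : U ∈ unitaryGroup n ℝ) : toEuclideanCLM (𝕜 := ℝ) U ∈ unitary _ := by
  rw [Unitary.mem_iff, ← map_star, ← map_mul, ← map_mul, Unitary.star_mul_self_of_mem hU,
    Unitary.mul_star_self_of_mem hU, map_one]
  exact ⟨rfl, rfl⟩

section ScalingMap

variable {n : ℕ} [NeZero n] {U : Matrix (Fin n) (Fin n) ℝ} {u : EuclideanSpace ℝ (Fin n)}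

theorem norm_sq_toEuclideanLin_diagonal (α : ℝ) (y : EuclideanSpace ℝ (Fin n)) :
    ‖Matrix.toEuclideanLin (Matrix.diagonal fun i : Fin n => if i = 0 then α else 1) y‖ ^ 2 =
      (α ^ 2 - 1) * y 0 ^ 2 + ‖y‖ ^ 2 := by
  rw [EuclideanSpace.norm_sq_eq, EuclideanSpace.norm_sq_eq, ← sub_eq_iff_eq_add,
    ← Finset.sum_sub_distrib, Finset.sum_eq_single 0]
  · simp only [Matrix.toLpLin_apply, Matrix.mulVec_diagonal, if_pos, Real.norm_eq_abs,
      mul_pow, sq_abs]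
    ring
  · intro i _ hi
    simp [Matrix.toLpLin_apply, Matrix.mulVec_diagonal, hi]
  · simp

theorem norm_sq_scalingMap (hU : U ∈ Matrix.orthogonalGroup (Fin n) ℝ)
    (hUu : Matrix.toEuclideanLin U u = EuclideanSpace.single 0 1) (α : ℝ)
    (w : EuclideanSpace ℝ (Fin n)) :
    ‖scalingMap U α w‖ ^ 2 = (α ^ 2 - 1) * ⟪u, w⟫ ^ 2 + ‖w‖ ^ 2 := by
  set T := Matrix.toEuclideanCLM (𝕜 := ℝ) U
  have hT : T ∈ unitary _ := Matrix.toEuclideanCLM_mem_unitary hU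
  have hUinv : U⁻¹ = star U := Matrix.inv_eq_left_inv (Unitary.star_mul_self_of_mem hU)
  have hS : scalingMap U α w = star T (Matrix.toEuclideanLin
      (Matrix.diagonal fun i : Fin n => if i = 0 then α else 1) (T w)) := by
    change Matrix.toEuclideanCLM (𝕜 := ℝ) (U⁻¹ * _ * U) w = _
    rw [hUinv, map_mul, map_mul, map_star]
    rfl
  have hTw : T w 0 = ⟪u, w⟫ := by
    rw [← ContinuousLinearMap.inner_map_map_of_mem_unitary hT u w]
    change _ = ⟪Matrix.toEuclideanLin U u, T w⟫
    rw [hUu, EuclideanSpace.inner_single_left]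
    simp
  rw [hS, ContinuousLinearMap.norm_map_of_mem_unitary (Unitary.star_mem hT),
    norm_sq_toEuclideanLin_diagonal, hTw, ContinuousLinearMap.norm_map_of_mem_unitary hT]

theorem norm_le_norm_scalingMap (hU : U ∈ Matrix.orthogonalGroup (Fin n) ℝ)
    (hUu : Matrix.toEuclideanLin U u = EuclideanSpace.single 0 1) {α : ℝ} (hα : 1 ≤ α ^ 2)
    (w : EuclideanSpace ℝ (Fin n)) : ‖w‖ ≤ ‖scalingMap U α w‖ := by
  rw [← pow_le_pow_iff_left₀ (norm_nonneg _) (norm_nonneg _) two_ne_zero,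
    norm_sq_scalingMap hU hUu]
  nlinarith [sq_nonneg ⟪u, w⟫]

theorem norm_scalingMap_le (hU : U ∈ Matrix.orthogonalGroup (Fin n) ℝ)
    (hUu : Matrix.toEuclideanLin U u = EuclideanSpace.single 0 1) (hu : ‖u‖ = 1) {α : ℝ}
    (hα : 1 ≤ α) (w : EuclideanSpace ℝ (Fin n)) : ‖scalingMap U α w‖ ≤ α * ‖w‖ := by
  rw [← pow_le_pow_iff_left₀ (norm_nonneg _) (by positivity) two_ne_zero,
    norm_sq_scalingMap hU hUu]
  have hcs : ⟪u, w⟫ ^ 2 ≤ ‖w‖ ^ 2 := by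
    simpa [hu] using sq_le_sq' (neg_le_of_abs_le (abs_real_inner_le_norm u w))
      (le_of_abs_le (abs_real_inner_le_norm u w))
  nlinarith [mul_le_mul_of_nonneg_left hcs (by nlinarith : (0 : ℝ) ≤ α ^ 2 - 1)]

theorem norm_scalingMap_smul (hU : U ∈ Matrix.orthogonalGroup (Fin n) ℝ)
    (hUu : Matrix.toEuclideanLin U u = EuclideanSpace.single 0 1) (α : ℝ)
    {v : EuclideanSpace ℝ (Fin n)} (hv : ‖v‖ = 1) {t : ℝ} (ht : 0 ≤ t) :
    ‖scalingMap U α (t • v)‖ = √((α ^ 2 - 1) * ⟪u, v⟫ ^ 2 + 1) * t := by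
  have hsq : (α ^ 2 - 1) * (t * ⟪u, v⟫) ^ 2 + t ^ 2 =
      ((α ^ 2 - 1) * ⟪u, v⟫ ^ 2 + 1) * t ^ 2 := by
    ring
  rw [← Real.sqrt_sq (norm_nonneg _), norm_sq_scalingMap hU hUu, real_inner_smul_right,
    norm_smul, hv, mul_one, Real.norm_eq_abs, sq_abs, hsq, Real.sqrt_mul' _ (sq_nonneg t),
    Real.sqrt_sq ht]

theorem norm_scalingMap_smul_le (hU : U ∈ Matrix.orthogonalGroup (Fin n) ℝ)
    (hUu : Matrix.toEuclideanLin U u = EuclideanSpace.single 0 1) (hu : ‖u‖ = 1) {α : ℝ}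
    (hα : 1 ≤ α) {v : EuclideanSpace ℝ (Fin n)} (hv : ‖v‖ = 1) {t : ℝ} (ht : 0 ≤ t) :
    ‖scalingMap U α (t • v)‖ ≤ α * t := by
  simpa [norm_smul, hv, abs_of_nonneg ht] using norm_scalingMap_le hU hUu hu hα (t • v)

theorem le_norm_scalingMap_smul (hU : U ∈ Matrix.orthogonalGroup (Fin n) ℝ)
    (hUu : Matrix.toEuclideanLin U u = EuclideanSpace.single 0 1) {α : ℝ} (hα : 1 ≤ α ^ 2)
    {v : EuclideanSpace ℝ (Fin n)} (hv : ‖v‖ = 1) {t : ℝ} (ht : 0 ≤ t) :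
    t ≤ ‖scalingMap U α (t • v)‖ := by
  simpa [norm_smul, hv, abs_of_nonneg ht] using norm_le_norm_scalingMap hU hUu hα (t • v)

end ScalingMap

section Grid

variable {v₁ v₂ : EuclideanSpace ℝ (Fin 2)} {d₁ d₂ : ℝ} {n₁ n₂ : ℕ}

theorem gridPoint_sub_gridPoint (a b : Fin n₁ × Fin n₂) :
    gridPoint v₁ v₂ d₁ d₂ a - gridPoint v₁ v₂ d₁ d₂ b =
      (((a.1 : ℝ) - b.1) * d₁) • v₁ + (((a.2 : ℝ) - b.2) * d₂) • v₂ := by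
  simp only [gridPoint]
  module

theorem gridPoint_sub_of_fst_succ {i i' : Fin n₁} (h : i.val + 1 = i') (j : Fin n₂) :
    gridPoint v₁ v₂ d₁ d₂ (i', j) - gridPoint v₁ v₂ d₁ d₂ (i, j) = d₁ • v₁ := by
  have h' : (i' : ℝ) = i + 1 := by exact_mod_cast h.symm
  simp [gridPoint_sub_gridPoint, h']

theorem gridPoint_sub_of_snd_succ {j j' : Fin n₂} (h : j.val + 1 = j') (i : Fin n₁) :
    gridPoint v₁ v₂ d₁ d₂ (i, j') - gridPoint v₁ v₂ d₁ d₂ (i, j) = d₂ • v₂ := by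
  have h' : (j' : ℝ) = j + 1 := by exact_mod_cast h.symm
  simp [gridPoint_sub_gridPoint, h']

theorem le_norm_gridPoint_sub (hv₂ : ‖v₂‖ = 1) (hv₁₂ : ⟪v₁, v₂⟫ = 0) (hd₂ : 0 ≤ d₂)
    {a b : Fin n₁ × Fin n₂} (h : a.2 ≠ b.2) :
    d₂ ≤ ‖gridPoint v₁ v₂ d₁ d₂ a - gridPoint v₁ v₂ d₁ d₂ b‖ := by
  have hinner : ⟪v₂, gridPoint v₁ v₂ d₁ d₂ a - gridPoint v₁ v₂ d₁ d₂ b⟫ =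
      ((a.2 : ℝ) - b.2) * d₂ := by
    rw [gridPoint_sub_gridPoint, inner_add_right, real_inner_smul_right, real_inner_smul_right,
      real_inner_comm, hv₁₂, real_inner_self_eq_norm_sq, hv₂]
    ring
  have hgap : (1 : ℝ) ≤ |(a.2 : ℝ) - b.2| := by
    have := Int.one_le_abs (sub_ne_zero.2 (Int.ofNat_inj.not.2 (Fin.val_ne_of_ne h)))
    exact_mod_cast this
  calc d₂ ≤ |(a.2 : ℝ) - b.2| * d₂ := le_mul_of_one_le_left hd₂ hgap
    _ = |⟪v₂, gridPoint v₁ v₂ d₁ d₂ a - gridPoint v₁ v₂ d₁ d₂ b⟫| := by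
      rw [hinner, abs_mul, abs_of_nonneg hd₂]
    _ ≤ ‖gridPoint v₁ v₂ d₁ d₂ a - gridPoint v₁ v₂ d₁ d₂ b‖ := by
      simpa [hv₂] using abs_real_inner_le_norm v₂ _

end Grid

namespace SimpleGraph

variable {V β : Type*} {G : SimpleGraph V}

theorem Reachable.apply_eq_of_adj {g : V → β} (hg : ∀ a b, G.Adj a b → g a = g b) {a b : V}
    (h : G.Reachable a b) : g a = g b := by
  obtain ⟨p⟩ := h
  induction p with
  | nil => rfl
  | cons hadj _ ih => exact (hg _ _ hadj).trans ih

theorem reachable_of_adj_succ {n : ℕ} (f : Fin n → V)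
    (hf : ∀ i j : Fin n, i.val + 1 = j → G.Adj (f i) (f j)) (i j : Fin n) :
    G.Reachable (f i) (f j) :=
  let φ : pathGraph n →g G :=
    ⟨f, fun h => (pathGraph_adj.1 h).elim (hf _ _) fun h' => (hf _ _ h').symm⟩
  (pathGraph_preconnected n i j).map φ

theorem natCard_connectedComponent_eq {g : V → β} (hg : ∀ a b, G.Reachable a b ↔ g a = g b)
    (hsurj : Function.Surjective g) : Nat.card G.ConnectedComponent = Nat.card β := by
  refine Nat.card_eq_of_bijective (ConnectedComponent.lift g fun a b p _ => (hg a b).1 ⟨p⟩)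
    ⟨?_, fun y => ?_⟩
  · rintro ⟨a⟩ ⟨b⟩ h
    exact ConnectedComponent.sound ((hg a b).2 h)
  · obtain ⟨a, rfl⟩ := hsurj y
    exact ⟨G.connectedComponentMk a, rfl⟩

variable {n₁ n₂ : ℕ} {G : SimpleGraph (Fin n₁ × Fin n₂)}

theorem reachable_of_snd_eq (hfst : ∀ (i i' : Fin n₁) (j : Fin n₂), i.val + 1 = i' →
    G.Adj (i, j) (i', j)) {a b : Fin n₁ × Fin n₂} (h : a.2 = b.2) : G.Reachable a b := by
  obtain ⟨i, j⟩ := a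
  obtain ⟨i', j'⟩ := b
  obtain rfl : j = j' := h
  exact reachable_of_adj_succ (fun i => (i, j)) (fun i i' h => hfst i i' j h) i i'

theorem connected_of_adj_succ [Nonempty (Fin n₁)] [Nonempty (Fin n₂)]
    (hfst : ∀ (i i' : Fin n₁) (j : Fin n₂), i.val + 1 = i' → G.Adj (i, j) (i', j))
    (hsnd : ∀ (i : Fin n₁) (j j' : Fin n₂), j.val + 1 = j' → G.Adj (i, j) (i, j')) :
    G.Connected := by
  refine ⟨fun a b => ?_⟩
  exact (reachable_of_snd_eq hfst (a := a) (b := (b.1, a.2)) rfl).trans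
    (reachable_of_adj_succ (fun j => (b.1, j)) (fun j j' h => hsnd b.1 j j' h) a.2 b.2)

end SimpleGraph

section ProximityGraph

variable {V : Type*} {f : V → EuclideanSpace ℝ (Fin 2)} {r : ℝ}

theorem proximityGraph_adj {a b : V} :
    (proximityGraph f r).Adj a b ↔ a ≠ b ∧ ‖f a - f b‖ ≤ r := by
  rw [proximityGraph, SimpleGraph.fromRel_adj, norm_sub_rev (f b), or_self]

variable {v₁ v₂ : EuclideanSpace ℝ (Fin 2)} {d₁ d₂ : ℝ} {n₁ n₂ : ℕ}
  (L : EuclideanSpace ℝ (Fin 2) →ₗ[ℝ] EuclideanSpace ℝ (Fin 2))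

theorem proximityGraph_adj_of_fst_succ (hr : ‖L (d₁ • v₁)‖ ≤ r) {i i' : Fin n₁}
    (h : i.val + 1 = i') (j : Fin n₂) :
    (proximityGraph (fun a : Fin n₁ × Fin n₂ => L (gridPoint v₁ v₂ d₁ d₂ a)) r).Adj
      (i, j) (i', j) := by
  refine proximityGraph_adj.2 ⟨fun hii => by simp_all [Fin.ext_iff], ?_⟩
  rwa [norm_sub_rev, ← map_sub, gridPoint_sub_of_fst_succ h]

theorem proximityGraph_adj_of_snd_succ (hr : ‖L (d₂ • v₂)‖ ≤ r) {j j' : Fin n₂}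
    (h : j.val + 1 = j') (i : Fin n₁) :
    (proximityGraph (fun a : Fin n₁ × Fin n₂ => L (gridPoint v₁ v₂ d₁ d₂ a)) r).Adj
      (i, j) (i, j') := by
  refine proximityGraph_adj.2 ⟨fun hjj => by simp_all [Fin.ext_iff], ?_⟩
  rwa [norm_sub_rev, ← map_sub, gridPoint_sub_of_snd_succ h]

theorem snd_eq_of_proximityGraph_adj (hv₂ : ‖v₂‖ = 1) (hv₁₂ : ⟪v₁, v₂⟫ = 0) (hd₂ : 0 ≤ d₂)
    (hL : ∀ w, ‖w‖ ≤ ‖L w‖) (hr : r < d₂) {a b : Fin n₁ × Fin n₂}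
    (h : (proximityGraph (fun a : Fin n₁ × Fin n₂ => L (gridPoint v₁ v₂ d₁ d₂ a)) r).Adj a b) :
    a.2 = b.2 := by
  by_contra hne
  have hfar : d₂ ≤ ‖L (gridPoint v₁ v₂ d₁ d₂ a) - L (gridPoint v₁ v₂ d₁ d₂ b)‖ := by
    rw [← map_sub]
    exact (le_norm_gridPoint_sub hv₂ hv₁₂ hd₂ hne).trans (hL _)
  linarith [(proximityGraph_adj.1 h).2]

end ProximityGraph

theorem scaled_grid_proximityGraph_components_general (v₁ v₂ : EuclideanSpace ℝ (Fin 2))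
    (hv₁ : ‖v₁‖ = 1) (hv₂ : ‖v₂‖ = 1) (hv₁₂ : ⟪v₁, v₂⟫ = 0)
    (d₁ d₂ : ℝ) (hd₁ : 0 < d₁)
    (n₁ n₂ : ℕ) (hn₁ : 1 < n₁) (hn₂ : 1 < n₂)
    (u : EuclideanSpace ℝ (Fin 2)) (hu : ‖u‖ = 1)
    (s : ℝ) (hs : 1 ≤ s) (hsd : s * d₁ < d₂)
    (U : Matrix (Fin 2) (Fin 2) ℝ) (hU : U ∈ Matrix.orthogonalGroup (Fin 2) ℝ)
    (hUu : Matrix.toEuclideanLin U u = EuclideanSpace.single 0 1) :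
    (∀ a b : Fin n₁ × Fin n₂,
      (proximityGraph (fun a : Fin n₁ × Fin n₂ => scalingMap U s (gridPoint v₁ v₂ d₁ d₂ a))
          (Real.sqrt ((s ^ 2 - 1) * ⟪u, v₁⟫ ^ 2 + 1) * d₁)).connectedComponentMk a =
        (proximityGraph (fun a : Fin n₁ × Fin n₂ => scalingMap U s (gridPoint v₁ v₂ d₁ d₂ a))
          (Real.sqrt ((s ^ 2 - 1) * ⟪u, v₁⟫ ^ 2 + 1) * d₁)).connectedComponentMk b ↔
        a.2 = b.2) ∧
    Nat.card
      (proximityGraph (fun a : Fin n₁ × Fin n₂ => scalingMap U s (gridPoint v₁ v₂ d₁ d₂ a))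
        (Real.sqrt ((s ^ 2 - 1) * ⟪u, v₁⟫ ^ 2 + 1) * d₁)).ConnectedComponent = n₂ ∧
    (proximityGraph (fun a : Fin n₁ × Fin n₂ => scalingMap U s (gridPoint v₁ v₂ d₁ d₂ a))
      (Real.sqrt ((s ^ 2 - 1) * (1 - ⟪u, v₁⟫ ^ 2) + 1) * d₂)).Connected := by
  set S := scalingMap U s
  have hd₂ : 0 ≤ d₂ := by nlinarith
  have hs₂ : 1 ≤ s ^ 2 := one_le_pow₀ hs
  have hr₁ : ‖S (d₁ • v₁)‖ = √((s ^ 2 - 1) * ⟪u, v₁⟫ ^ 2 + 1) * d₁ :=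
    norm_scalingMap_smul hU hUu s hv₁ hd₁.le
  have hr₂ : ‖S (d₂ • v₂)‖ ≤ √((s ^ 2 - 1) * (1 - ⟪u, v₁⟫ ^ 2) + 1) * d₂ := by
    have hbessel := inner_sq_add_inner_sq_le hv₁ hv₂ hv₁₂ u
    rw [hu, one_pow] at hbessel
    rw [norm_scalingMap_smul hU hUu s hv₂ hd₂]
    gcongr
    linarith
  have hstep₁ : ‖S (d₁ • v₁)‖ < d₂ := (norm_scalingMap_smul_le hU hUu hu hs hv₁ hd₁.le).trans_lt hsd
  have hstep₂ : d₂ ≤ ‖S (d₂ • v₂)‖ := le_norm_scalingMap_smul hU hUu hs₂ hv₂ hd₂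
  have hreach : ∀ a b, (proximityGraph (fun a : Fin n₁ × Fin n₂ => S (gridPoint v₁ v₂ d₁ d₂ a))
      (√((s ^ 2 - 1) * ⟪u, v₁⟫ ^ 2 + 1) * d₁)).Reachable a b ↔ a.2 = b.2 := fun a b =>
    ⟨fun h => h.apply_eq_of_adj fun _ _ => snd_eq_of_proximityGraph_adj S hv₂ hv₁₂ hd₂
        (norm_le_norm_scalingMap hU hUu hs₂) (hr₁ ▸ hstep₁),
      SimpleGraph.reachable_of_snd_eq fun i i' j h => proximityGraph_adj_of_fst_succ S hr₁.le h j⟩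
  have : Nonempty (Fin n₁) := ⟨⟨0, by omega⟩⟩
  have : Nonempty (Fin n₂) := ⟨⟨0, by omega⟩⟩
  refine ⟨fun a b => SimpleGraph.ConnectedComponent.eq.trans (hreach a b), ?_, ?_⟩
  · rw [SimpleGraph.natCard_connectedComponent_eq hreach Prod.snd_surjective, Nat.card_fin]
  · exact SimpleGraph.connected_of_adj_succ
      (fun i i' j h => proximityGraph_adj_of_fst_succ S ((hstep₁.le.trans hstep₂).trans hr₂) h j)
      (fun i j j' h => proximityGraph_adj_of_snd_succ S hr₂ h i)

/-- for the grid scaled by `S_{u,s}` with `1 ≤ s` and `s·d₁ < d₂`, and with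
`c = ⟨u, v₁⟩`, `s₁ = √((s²−1)c²+1)`, `s₂ = √((s²−1)(1−c²)+1)`, the proximity graph at scale
`s₁·d₁` has exactly `n₂` connected components (the rows), and the proximity graph at scale
`s₂·d₂` is connected. -/
theorem scaled_grid_proximityGraph_components (v₁ v₂ : EuclideanSpace ℝ (Fin 2))
    (hv₁ : ‖v₁‖ = 1) (hv₂ : ‖v₂‖ = 1) (hv₁₂ : ⟪v₁, v₂⟫ = 0)
    (d₁ d₂ : ℝ) (hd₁ : 0 < d₁) (hd₁₂ : d₁ < d₂)
    (n₁ n₂ : ℕ) (hn₁ : 1 < n₁) (hn₂ : 1 < n₂)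
    (u : EuclideanSpace ℝ (Fin 2)) (hu : ‖u‖ = 1)
    (s : ℝ) (hs : 1 ≤ s) (hsd : s * d₁ < d₂)
    (U : Matrix (Fin 2) (Fin 2) ℝ) (hU : U ∈ Matrix.orthogonalGroup (Fin 2) ℝ)
    (hUu : Matrix.toEuclideanLin U u = EuclideanSpace.single 0 1) :
    (∀ a b : Fin n₁ × Fin n₂,
      (proximityGraph (fun a : Fin n₁ × Fin n₂ => scalingMap U s (gridPoint v₁ v₂ d₁ d₂ a))
          (Real.sqrt ((s ^ 2 - 1) * ⟪u, v₁⟫ ^ 2 + 1) * d₁)).connectedComponentMk a =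
        (proximityGraph (fun a : Fin n₁ × Fin n₂ => scalingMap U s (gridPoint v₁ v₂ d₁ d₂ a))
          (Real.sqrt ((s ^ 2 - 1) * ⟪u, v₁⟫ ^ 2 + 1) * d₁)).connectedComponentMk b ↔
        a.2 = b.2) ∧
    Nat.card
      (proximityGraph (fun a : Fin n₁ × Fin n₂ => scalingMap U s (gridPoint v₁ v₂ d₁ d₂ a))
        (Real.sqrt ((s ^ 2 - 1) * ⟪u, v₁⟫ ^ 2 + 1) * d₁)).ConnectedComponent = n₂ ∧
    (proximityGraph (fun a : Fin n₁ × Fin n₂ => scalingMap U s (gridPoint v₁ v₂ d₁ d₂ a))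
      (Real.sqrt ((s ^ 2 - 1) * (1 - ⟪u, v₁⟫ ^ 2) + 1) * d₂)).Connected :=
  scaled_grid_proximityGraph_components_general v₁ v₂ hv₁ hv₂ hv₁₂ d₁ d₂ hd₁ n₁ n₂ hn₁ hn₂ u hu s hs
    hsd U hU hUu
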